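/- Let U : ℝ → ℝ be smooth with bounded second derivative U''. Then the entropy dissipation term satisfies the uniform L¹ bound ε ∫₀^∞ ∫_ℝ |U''(u)| (∂_x u)² dx dt ≤ (‖U''‖_∞ / 2) ‖u₀‖²_{L²(ℝ)} (estimate (2.12ii) of the paper). -/

import Mathlib

open MeasureTheory Filter Set Topology

lemma aux_integral_deriv_zero {W W' : ℝ → ℝ} (hd : ∀ x, HasDerivAt W (W' x) x)
    (hi : Integrable W') (htop : Tendsto W atTop (𝓝 0)) (hbot : Tendsto W atBot (𝓝 0)) :
    ∫ x, W' x = 0 := by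
  have h1 : ∫ x in Iic (0:ℝ), W' x = W 0 - 0 :=
    integral_Iic_of_hasDerivAt_of_tendsto' (fun x _ => hd x) hi.integrableOn hbot
  have h2 : ∫ x in Ioi (0:ℝ), W' x = 0 - W 0 :=
    integral_Ioi_of_hasDerivAt_of_tendsto' (fun x _ => hd x) hi.integrableOn htop
  rw [← intervalIntegral.integral_Iic_add_Ioi (b := (0:ℝ)) hi.integrableOn hi.integrableOn, h1, h2]
  ring

lemma aux_decay_combine {g : ℝ → ℝ} {C0 C2 : ℝ} (h0 : ∀ x, |g x| ≤ C0)
    (h2 : ∀ x, x ^ 2 * |g x| ≤ C2) :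
    ∀ x, |g x| ≤ (C0 + C2) * (1 + x ^ 2)⁻¹ := by
  intro x
  rw [← div_eq_mul_inv, le_div_iff₀ (by positivity)]
  nlinarith [h0 x, h2 x, abs_nonneg (g x), sq_nonneg x]

lemma aux_le_const {C : ℝ} (hC : 0 ≤ C) (x : ℝ) : C * (1 + x ^ 2)⁻¹ ≤ C := by
  rw [← div_eq_mul_inv, div_le_iff₀ (by positivity)]
  nlinarith [sq_nonneg x]

lemma aux_tendsto_bound (C : ℝ) : Tendsto (fun x : ℝ => C * (1 + x ^ 2)⁻¹) atTop (𝓝 0) := by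
  have : Tendsto (fun x : ℝ => (1 + x ^ 2)) atTop atTop :=
    tendsto_atTop_add_const_left _ 1 (tendsto_pow_atTop (by norm_num))
  simpa using (tendsto_inv_atTop_zero.comp this).const_mul C

lemma aux_tendsto_bound_bot (C : ℝ) : Tendsto (fun x : ℝ => C * (1 + x ^ 2)⁻¹) atBot (𝓝 0) := by
  have h2 : Tendsto (fun x : ℝ => x ^ 2) atBot atTop := by
    have := (tendsto_pow_atTop (n := 2) (by norm_num)).comp
      (tendsto_neg_atBot_atTop (G := ℝ))
    refine this.congr fun x => by simp [Function.comp]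
  have : Tendsto (fun x : ℝ => (1 + x ^ 2)) atBot atTop := tendsto_atTop_add_const_left _ 1 h2
  simpa using (tendsto_inv_atTop_zero.comp this).const_mul C

lemma aux_integrable_of_bound {h : ℝ → ℝ} {C : ℝ} (hc : Continuous h)
    (hb : ∀ x, |h x| ≤ C * (1 + x ^ 2)⁻¹) : Integrable h := by
  refine (integrable_inv_one_add_sq.const_mul C).mono' hc.aestronglyMeasurable ?_
  exact ae_of_all _ fun x => by simpa [Real.norm_eq_abs] using hb x

lemma aux_tendsto_zero_of_bound {h : ℝ → ℝ} {C : ℝ} (hb : ∀ x, |h x| ≤ C * (1 + x ^ 2)⁻¹) :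
    Tendsto h atTop (𝓝 0) ∧ Tendsto h atBot (𝓝 0) :=
  ⟨squeeze_zero_norm (fun x => by simpa [Real.norm_eq_abs] using hb x) (aux_tendsto_bound C),
   squeeze_zero_norm (fun x => by simpa [Real.norm_eq_abs] using hb x) (aux_tendsto_bound_bot C)⟩

set_option maxHeartbeats 1000000 in
theorem stmt8
    (f : ℝ → ℝ) (hf : ContDiff ℝ (⊤ : ℕ∞) f)
    (c : ℝ) (hc : ∀ v : ℝ, |deriv f v| ≤ c)
    (ε δ : ℝ) (hε : 0 < ε) (hδ : 0 < δ)
    (u : ℝ → ℝ → ℝ) (u₀ : ℝ → ℝ)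
    (hu : ContDiff ℝ (⊤ : ℕ∞) (fun p : ℝ × ℝ => u p.1 p.2))
    (hu₀s : ContDiff ℝ (⊤ : ℕ∞) u₀)
    (hpde : ∀ t ≥ (0:ℝ), ∀ x : ℝ,
      deriv (fun s => u s x) t + deriv (fun y => f (u t y)) x
        = ε * iteratedDeriv 2 (u t) x + δ * iteratedDeriv 3 (u t) x)
    (hinit : u 0 = u₀)
    (hu₀L2 : MemLp u₀ 2 volume)
    (hu₀'L2 : MemLp (deriv u₀) 2 volume)
    (hdecay : ∀ (n m : ℕ) (T : ℝ), ∃ C : ℝ, ∀ t ∈ Set.Icc (0:ℝ) T, ∀ x : ℝ,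
      |x| ^ m * |iteratedDeriv n (u t) x| ≤ C)
    (U : ℝ → ℝ) (hU : ContDiff ℝ (⊤ : ℕ∞) U)
    (CU2 : ℝ) (hCU2 : ∀ v : ℝ, |iteratedDeriv 2 U v| ≤ CU2) :
    ENNReal.ofReal ε *
        ∫⁻ t in Set.Ioi (0:ℝ), ∫⁻ x : ℝ,
          ENNReal.ofReal (|iteratedDeriv 2 U (u t x)| * (deriv (u t) x) ^ 2)
      ≤ ENNReal.ofReal ((CU2 / 2) * ∫ x : ℝ, (u₀ x) ^ 2) := by
  classical
  have hone : (1 : WithTop ℕ∞) ≤ ((⊤ : ℕ∞) : WithTop ℕ∞) := by exact_mod_cast le_top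
  have hne : ((⊤ : ℕ∞) : WithTop ℕ∞) ≠ 0 := ne_of_gt (lt_of_lt_of_le zero_lt_one hone)
  -- Basic smoothness conversions
  have hu' : ContDiff ℝ (⊤ : ℕ∞) (fun p : ℝ × ℝ => u p.1 p.2) := hu.of_le (by simp)
  have hf' : ContDiff ℝ (⊤ : ℕ∞) f := hf.of_le (by simp)
  have hfd : Differentiable ℝ f := hf'.differentiable hne
  have hfc : Continuous f := hf'.continuous
  have hfdc : Continuous (deriv f) := hf'.continuous_deriv hone
  have hsx : ∀ t, ContDiff ℝ (⊤ : ℕ∞) (u t) := fun t =>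
    hu'.comp (contDiff_const.prodMk contDiff_id)
  have hts : ∀ x, ContDiff ℝ (⊤ : ℕ∞) (fun s => u s x) := fun x =>
    hu'.comp (contDiff_id.prodMk contDiff_const)
  have hsx1 : ∀ t, ContDiff ℝ (⊤ : ℕ∞) (deriv (u t)) := fun t =>
    (contDiff_infty_iff_deriv.mp (hsx t)).2
  have hsx2 : ∀ t, ContDiff ℝ (⊤ : ℕ∞) (deriv (deriv (u t))) := fun t =>
    (contDiff_infty_iff_deriv.mp (hsx1 t)).2
  have hsx3 : ∀ t, ContDiff ℝ (⊤ : ℕ∞) (deriv (deriv (deriv (u t)))) := fun t =>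
    (contDiff_infty_iff_deriv.mp (hsx2 t)).2
  have hder1 : ∀ t x, HasDerivAt (u t) (deriv (u t) x) x := fun t x =>
    ((hsx t).differentiable hne x).hasDerivAt
  have hder2 : ∀ t x, HasDerivAt (deriv (u t)) (deriv (deriv (u t)) x) x := fun t x =>
    ((hsx1 t).differentiable hne x).hasDerivAt
  have hder3 : ∀ t x, HasDerivAt (deriv (deriv (u t))) (deriv (deriv (deriv (u t))) x) x :=
    fun t x => ((hsx2 t).differentiable hne x).hasDerivAt
  have hdert : ∀ t x, HasDerivAt (fun s => u s x) (deriv (fun s => u s x) t) t := fun t x =>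
    ((hts x).differentiable hne t).hasDerivAt
  -- iterated derivative rewritings
  have hID2 : ∀ t, iteratedDeriv 2 (u t) = deriv (deriv (u t)) := by
    intro t; rw [iteratedDeriv_succ, iteratedDeriv_one]
  have hID3 : ∀ t, iteratedDeriv 3 (u t) = deriv (deriv (deriv (u t))) := by
    intro t; rw [iteratedDeriv_succ, iteratedDeriv_succ, iteratedDeriv_one]
  -- chain rule for f ∘ u t
  have hchain : ∀ t x, deriv (fun y => f (u t y)) x = deriv f (u t x) * deriv (u t) x :=
    fun t x => ((hfd (u t x)).hasDerivAt.comp x (hder1 t x)).deriv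
  -- rearranged PDE
  have hpde' : ∀ t, 0 ≤ t → ∀ x, deriv (fun s => u s x) t
      = ε * deriv (deriv (u t)) x + δ * deriv (deriv (deriv (u t))) x
        - deriv f (u t x) * deriv (u t) x := by
    intro t ht x
    have h := hpde t ht x
    rw [hID2, hID3, hchain] at h
    linarith
  -- joint continuity of the spatial derivative
  have hv1 : ∀ t x, HasDerivAt (u t)
      (fderiv ℝ (fun p : ℝ × ℝ => u p.1 p.2) (t, x) (0, 1)) x := by
    intro t x
    have hF := (hu'.differentiable hne (t, x)).hasFDerivAt
    have hι : HasDerivAt (fun y : ℝ => ((t, y) : ℝ × ℝ)) ((0 : ℝ), (1 : ℝ)) x :=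
      (hasDerivAt_const x t).prodMk (hasDerivAt_id x)
    exact hF.comp_hasDerivAt x hι
  have hv1c : Continuous (fun p : ℝ × ℝ => deriv (u p.1) p.2) := by
    have h1 : Continuous (fun p : ℝ × ℝ => fderiv ℝ (fun q : ℝ × ℝ => u q.1 q.2) p (0, 1)) :=
      (hu'.continuous_fderiv hne).clm_apply continuous_const
    exact h1.congr fun p => ((hv1 p.1 p.2).deriv).symm
  have hutc : ∀ t, 0 ≤ t → Continuous (fun x => deriv (fun s => u s x) t) := by
    intro t ht
    have hcont2 : Continuous (fun x => ε * deriv (deriv (u t)) x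
        + δ * deriv (deriv (deriv (u t))) x - deriv f (u t x) * deriv (u t) x) :=
      ((continuous_const.mul (hsx2 t).continuous).add
        (continuous_const.mul (hsx3 t).continuous)).sub
        ((hfdc.comp (hsx t).continuous).mul (hsx1 t).continuous)
    exact hcont2.congr fun x => (hpde' t ht x).symm
  -- decay bounds
  have hbnd : ∀ (n : ℕ) (T : ℝ), ∃ C : ℝ, 0 ≤ C ∧ ∀ t ∈ Icc (0:ℝ) T, ∀ x,
      |iteratedDeriv n (u t) x| ≤ C * (1 + x ^ 2)⁻¹ := by
    intro n T
    obtain ⟨C0, hC0⟩ := hdecay n 0 T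
    obtain ⟨C2, hC2⟩ := hdecay n 2 T
    refine ⟨max C0 0 + max C2 0, by positivity, fun t htmem x => ?_⟩
    refine aux_decay_combine (g := iteratedDeriv n (u t)) (fun y => ?_) (fun y => ?_) x
    · have := hC0 t htmem y
      simp only [pow_zero, one_mul] at this
      exact this.trans (le_max_left _ _)
    · have := hC2 t htmem y
      rw [sq_abs] at this
      exact this.trans (le_max_left _ _)
  -- integrability of the square of the spatial derivative
  have hDint : ∀ t, 0 ≤ t → Integrable (fun x => (deriv (u t) x) ^ 2) := by
    intro t ht
    obtain ⟨C1, hC1, hB1⟩ := hbnd 1 t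
    have b1 : ∀ x, |deriv (u t) x| ≤ C1 * (1 + x ^ 2)⁻¹ := fun x => by
      have := hB1 t ⟨ht, le_refl t⟩ x; rwa [iteratedDeriv_one] at this
    refine aux_integrable_of_bound (C := C1 * C1) (((hsx1 t).continuous).pow 2) fun x => ?_
    have p1 : |deriv (u t) x| ≤ C1 := (b1 x).trans (aux_le_const hC1 x)
    rw [abs_of_nonneg (sq_nonneg _)]
    nlinarith [b1 x, abs_nonneg (deriv (u t) x), sq_abs (deriv (u t) x),
      (inv_pos.mpr (by positivity : (0:ℝ) < 1 + x ^ 2)).le]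
  -- key spatial identity (integration by parts)
  have hkey : ∀ t, 0 ≤ t →
      (∫ x, 2 * u t x * deriv (fun s => u s x) t)
        = -(2 * ε) * ∫ x, (deriv (u t) x) ^ 2 := by
    intro t ht
    obtain ⟨C0, hC0, hB0⟩ := hbnd 0 t
    obtain ⟨C1, hC1, hB1⟩ := hbnd 1 t
    obtain ⟨C2, hC2, hB2⟩ := hbnd 2 t
    obtain ⟨C3, hC3, hB3⟩ := hbnd 3 t
    have hc0 : (0:ℝ) ≤ c := (abs_nonneg _).trans (hc 0)
    have htt : t ∈ Icc (0:ℝ) t := ⟨ht, le_refl t⟩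
    have b0 : ∀ x, |u t x| ≤ C0 * (1 + x ^ 2)⁻¹ := fun x => by
      have := hB0 t htt x; rwa [iteratedDeriv_zero] at this
    have b1 : ∀ x, |deriv (u t) x| ≤ C1 * (1 + x ^ 2)⁻¹ := fun x => by
      have := hB1 t htt x; rwa [iteratedDeriv_one] at this
    have b2 : ∀ x, |deriv (deriv (u t)) x| ≤ C2 * (1 + x ^ 2)⁻¹ := fun x => by
      have := hB2 t htt x; rwa [hID2] at this
    have b3 : ∀ x, |deriv (deriv (deriv (u t))) x| ≤ C3 * (1 + x ^ 2)⁻¹ := fun x => by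
      have := hB3 t htt x; rwa [hID3] at this
    have p0 : ∀ x, |u t x| ≤ C0 := fun x => (b0 x).trans (aux_le_const hC0 x)
    have p1 : ∀ x, |deriv (u t) x| ≤ C1 := fun x => (b1 x).trans (aux_le_const hC1 x)
    have p2 : ∀ x, |deriv (deriv (u t)) x| ≤ C2 := fun x => (b2 x).trans (aux_le_const hC2 x)
    have p3 : ∀ x, |deriv (deriv (deriv (u t))) x| ≤ C3 := fun x =>
      (b3 x).trans (aux_le_const hC3 x)
    have hUT : ∀ x, |deriv (fun s => u s x) t| ≤ ε * C2 + δ * C3 + c * C1 := by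
      intro x
      rw [hpde' t ht x]
      have hm : |deriv f (u t x) * deriv (u t) x| ≤ c * C1 := by
        rw [abs_mul]
        exact mul_le_mul (hc _) (p1 x) (abs_nonneg _) ((abs_nonneg (deriv f (u t x))).trans (hc (u t x)))
      have h2 : |ε * deriv (deriv (u t)) x| ≤ ε * C2 := by
        rw [abs_mul, abs_of_pos hε]; exact mul_le_mul_of_nonneg_left (p2 x) hε.le
      have h3 : |δ * deriv (deriv (deriv (u t))) x| ≤ δ * C3 := by
        rw [abs_mul, abs_of_pos hδ]; exact mul_le_mul_of_nonneg_left (p3 x) hδ.le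
      calc |ε * deriv (deriv (u t)) x + δ * deriv (deriv (deriv (u t))) x
            - deriv f (u t x) * deriv (u t) x|
          ≤ |ε * deriv (deriv (u t)) x + δ * deriv (deriv (deriv (u t))) x|
            + |deriv f (u t x) * deriv (u t) x| := abs_sub _ _
        _ ≤ (|ε * deriv (deriv (u t)) x| + |δ * deriv (deriv (deriv (u t))) x|)
            + |deriv f (u t x) * deriv (u t) x| := by
              exact add_le_add_left (abs_add_le _ _) _
        _ ≤ ε * C2 + δ * C3 + c * C1 := by linarith
    -- the antiderivative of v * f'(v)
    set Gf : ℝ → ℝ := fun v => v * f v - ∫ s in (0:ℝ)..v, f s with hGfdef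
    have hG : ∀ v, HasDerivAt Gf (v * deriv f v) v := by
      intro v
      have h1 : HasDerivAt (fun w : ℝ => w * f w) (1 * f v + v * deriv f v) v :=
        (hasDerivAt_id v).mul (hfd v).hasDerivAt
      have h2 : HasDerivAt (fun w => ∫ s in (0:ℝ)..w, f s) (f v) v :=
        intervalIntegral.integral_hasDerivAt_right (hfc.intervalIntegrable 0 v)
          (hfc.stronglyMeasurableAtFilter _ _) hfc.continuousAt
      have h3 := h1.sub h2
      refine h3.congr_deriv ?_
      ring
    have hGf0 : Gf 0 = 0 := by simp [hGfdef]
    -- derivative of the boundary-term function W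
    have hW : ∀ x, HasDerivAt (fun y => -2 * Gf (u t y) + 2 * ε * (u t y * deriv (u t) y)
        + δ * (2 * (u t y * deriv (deriv (u t)) y) - (deriv (u t) y) ^ 2))
        (2 * u t x * deriv (fun s => u s x) t + 2 * ε * (deriv (u t) x) ^ 2) x := by
      intro x
      have h1 := hder1 t x
      have h2 := hder2 t x
      have h3 := hder3 t x
      have e1 : HasDerivAt (fun y => Gf (u t y))
          (u t x * deriv f (u t x) * deriv (u t) x) x := (hG (u t x)).comp x h1
      have e2 : HasDerivAt (fun y => u t y * deriv (u t) y)
          (deriv (u t) x * deriv (u t) x + u t x * deriv (deriv (u t)) x) x := h1.mul h2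
      have e3 : HasDerivAt (fun y => u t y * deriv (deriv (u t)) y)
          (deriv (u t) x * deriv (deriv (u t)) x + u t x * deriv (deriv (deriv (u t))) x) x :=
        h1.mul h3
      have e4 : HasDerivAt (fun y => (deriv (u t) y) ^ 2)
          (2 * deriv (u t) x * deriv (deriv (u t)) x) x := by
        have := h2.pow 2
        simp at this
        exact this
      have comb := ((e1.const_mul (-2 : ℝ)).add (e2.const_mul (2 * ε))).add
        (((e3.const_mul (2 : ℝ)).sub e4).const_mul δ)
      refine comb.congr_deriv ?_
      rw [hpde' t ht x]
      ring
    -- limits of W at ±∞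
    have t0 := aux_tendsto_zero_of_bound b0
    have t1 := aux_tendsto_zero_of_bound b1
    have t2 := aux_tendsto_zero_of_bound b2
    have hGtt : Tendsto (fun x => Gf (u t x)) atTop (𝓝 0) := by
      have := ((hG 0).continuousAt.tendsto).comp t0.1
      simpa [Function.comp_def, hGf0] using this
    have hGtb : Tendsto (fun x => Gf (u t x)) atBot (𝓝 0) := by
      have := ((hG 0).continuousAt.tendsto).comp t0.2
      simpa [Function.comp_def, hGf0] using this
    have hWtop : Tendsto (fun y => -2 * Gf (u t y) + 2 * ε * (u t y * deriv (u t) y)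
        + δ * (2 * (u t y * deriv (deriv (u t)) y) - (deriv (u t) y) ^ 2)) atTop (𝓝 0) := by
      have := ((hGtt.const_mul (-2 : ℝ)).add ((t0.1.mul t1.1).const_mul (2 * ε))).add
        ((((t0.1.mul t2.1).const_mul (2 : ℝ)).sub (t1.1.pow 2)).const_mul δ)
      convert this using 2
      norm_num
    have hWbot : Tendsto (fun y => -2 * Gf (u t y) + 2 * ε * (u t y * deriv (u t) y)
        + δ * (2 * (u t y * deriv (deriv (u t)) y) - (deriv (u t) y) ^ 2)) atBot (𝓝 0) := by
      have := ((hGtb.const_mul (-2 : ℝ)).add ((t0.2.mul t1.2).const_mul (2 * ε))).add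
        ((((t0.2.mul t2.2).const_mul (2 : ℝ)).sub (t1.2.pow 2)).const_mul δ)
      convert this using 2
      norm_num
    -- integrability of W'
    have hi1 : Integrable (fun x => 2 * u t x * deriv (fun s => u s x) t) := by
      refine aux_integrable_of_bound (C := 2 * C0 * (ε * C2 + δ * C3 + c * C1))
        ((continuous_const.mul (hsx t).continuous).mul (hutc t ht)) fun x => ?_
      have hx : (0:ℝ) ≤ (1 + x ^ 2)⁻¹ := by positivity
      have habs : |2 * u t x * deriv (fun s => u s x) t|
          = 2 * |u t x| * |deriv (fun s => u s x) t| := by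
        rw [abs_mul, abs_mul]; norm_num
      rw [habs]
      have hM0 : (0:ℝ) ≤ ε * C2 + δ * C3 + c * C1 := by positivity
      nlinarith [mul_le_mul (b0 x) (hUT x) (abs_nonneg _)
        (by positivity : (0:ℝ) ≤ C0 * (1 + x ^ 2)⁻¹),
        abs_nonneg (u t x), abs_nonneg (deriv (fun s => u s x) t)]
    have hi2 : Integrable (fun x => 2 * ε * (deriv (u t) x) ^ 2) :=
      (hDint t ht).const_mul (2 * ε)
    have hWint : Integrable (fun x => 2 * u t x * deriv (fun s => u s x) t
        + 2 * ε * (deriv (u t) x) ^ 2) := hi1.add hi2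
    have hzero := aux_integral_deriv_zero hW hWint hWtop hWbot
    rw [integral_add hi1 hi2] at hzero
    have h2e : (∫ x, 2 * ε * (deriv (u t) x) ^ 2) = 2 * ε * ∫ x, (deriv (u t) x) ^ 2 :=
      integral_const_mul _ _
    rw [h2e] at hzero
    linarith
  -- derivative of the energy
  have hgderiv : ∀ t, 0 < t → HasDerivAt (fun s => ∫ x, (u s x) ^ 2)
      (-(2 * ε) * ∫ x, (deriv (u t) x) ^ 2) t := by
    intro t ht
    obtain ⟨C0, hC0, hB0⟩ := hbnd 0 (t + 1)
    obtain ⟨C1, hC1, hB1⟩ := hbnd 1 (t + 1)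
    obtain ⟨C2, hC2, hB2⟩ := hbnd 2 (t + 1)
    obtain ⟨C3, hC3, hB3⟩ := hbnd 3 (t + 1)
    have hc0 : (0:ℝ) ≤ c := (abs_nonneg _).trans (hc 0)
    have hr : (0:ℝ) < min t 1 := lt_min ht one_pos
    have hball : ∀ s ∈ Metric.ball t (min t 1), 0 ≤ s ∧ s ∈ Icc (0:ℝ) (t + 1) := by
      intro s hs
      rw [Metric.mem_ball, Real.dist_eq] at hs
      have h := abs_lt.mp hs
      have h1 := min_le_left t 1
      have h2 := min_le_right t 1
      exact ⟨by linarith, by constructor <;> linarith⟩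
    have hbnds : ∀ s ∈ Metric.ball t (min t 1), ∀ x : ℝ,
        |2 * u s x * deriv (fun s' => u s' x) s|
          ≤ 2 * C0 * (ε * C2 + δ * C3 + c * C1) * (1 + x ^ 2)⁻¹ := by
      intro s hs x
      obtain ⟨hs0, hsI⟩ := hball s hs
      have b0 : |u s x| ≤ C0 * (1 + x ^ 2)⁻¹ := by
        have := hB0 s hsI x; rwa [iteratedDeriv_zero] at this
      have p1 : |deriv (u s) x| ≤ C1 := by
        have := hB1 s hsI x; rw [iteratedDeriv_one] at this
        exact this.trans (aux_le_const hC1 x)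
      have p2 : |deriv (deriv (u s)) x| ≤ C2 := by
        have := hB2 s hsI x; rw [hID2] at this
        exact this.trans (aux_le_const hC2 x)
      have p3 : |deriv (deriv (deriv (u s))) x| ≤ C3 := by
        have := hB3 s hsI x; rw [hID3] at this
        exact this.trans (aux_le_const hC3 x)
      have hUT : |deriv (fun s' => u s' x) s| ≤ ε * C2 + δ * C3 + c * C1 := by
        rw [hpde' s hs0 x]
        have hm : |deriv f (u s x) * deriv (u s) x| ≤ c * C1 := by
          rw [abs_mul]
          exact mul_le_mul (hc _) p1 (abs_nonneg _)
            ((abs_nonneg (deriv f (u s x))).trans (hc (u s x)))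
        have h2 : |ε * deriv (deriv (u s)) x| ≤ ε * C2 := by
          rw [abs_mul, abs_of_pos hε]; exact mul_le_mul_of_nonneg_left p2 hε.le
        have h3 : |δ * deriv (deriv (deriv (u s))) x| ≤ δ * C3 := by
          rw [abs_mul, abs_of_pos hδ]; exact mul_le_mul_of_nonneg_left p3 hδ.le
        calc |ε * deriv (deriv (u s)) x + δ * deriv (deriv (deriv (u s))) x
              - deriv f (u s x) * deriv (u s) x|
            ≤ |ε * deriv (deriv (u s)) x + δ * deriv (deriv (deriv (u s))) x|
              + |deriv f (u s x) * deriv (u s) x| := abs_sub _ _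
          _ ≤ (|ε * deriv (deriv (u s)) x| + |δ * deriv (deriv (deriv (u s))) x|)
              + |deriv f (u s x) * deriv (u s) x| := add_le_add_left (abs_add_le _ _) _
          _ ≤ ε * C2 + δ * C3 + c * C1 := by linarith
      have habs : |2 * u s x * deriv (fun s' => u s' x) s|
          = 2 * |u s x| * |deriv (fun s' => u s' x) s| := by
        rw [abs_mul, abs_mul]; norm_num
      rw [habs]
      have hx : (0:ℝ) ≤ (1 + x ^ 2)⁻¹ := by positivity
      nlinarith [mul_le_mul b0 hUT (abs_nonneg _)
        (by positivity : (0:ℝ) ≤ C0 * (1 + x ^ 2)⁻¹),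
        abs_nonneg (u s x), abs_nonneg (deriv (fun s' => u s' x) s)]
    have hu2int : Integrable (fun x => (u t x) ^ 2) := by
      refine aux_integrable_of_bound (C := C0 * C0) (((hsx t).continuous).pow 2) fun x => ?_
      have b0 : |u t x| ≤ C0 * (1 + x ^ 2)⁻¹ := by
        have := hB0 t ⟨ht.le, by linarith⟩ x; rwa [iteratedDeriv_zero] at this
      have p0 : |u t x| ≤ C0 := b0.trans (aux_le_const hC0 x)
      rw [abs_of_nonneg (sq_nonneg _)]
      nlinarith [mul_le_mul p0 b0 (abs_nonneg _) hC0, sq_abs (u t x),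
        (by positivity : (0:ℝ) ≤ (1 + x ^ 2)⁻¹)]
    have key := hasDerivAt_integral_of_dominated_loc_of_deriv_le (μ := volume)
      (x₀ := t) (F := fun s x => (u s x) ^ 2)
      (F' := fun s x => 2 * u s x * deriv (fun s' => u s' x) s)
      (bound := fun x => 2 * C0 * (ε * C2 + δ * C3 + c * C1) * (1 + x ^ 2)⁻¹)
      (Metric.ball_mem_nhds t hr)
      (Eventually.of_forall fun s => (((hsx s).continuous).pow 2).aestronglyMeasurable)
      hu2int
      (((continuous_const.mul (hsx t).continuous).mul (hutc t ht.le)).aestronglyMeasurable)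
      (ae_of_all _ fun x s hs => by
        rw [Real.norm_eq_abs]; exact hbnds s hs x)
      (integrable_inv_one_add_sq.const_mul (2 * C0 * (ε * C2 + δ * C3 + c * C1)))
      (ae_of_all _ fun x s _ => by
        have hd := hdert s x
        have heq : (fun s' => (u s' x) ^ 2) = fun s' => u s' x * u s' x := by
          funext y; ring
        rw [heq]
        refine (hd.mul hd).congr_deriv ?_
        beta_reduce
        ring)
    have hfin := key.2
    rw [hkey t ht.le] at hfin
    exact hfin
  -- continuity of the energy and of the dissipation
  have hgcont : ∀ T : ℝ, ContinuousOn (fun s => ∫ x, (u s x) ^ 2) (Icc 0 T) := by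
    intro T
    obtain ⟨C0, hC0, hB0⟩ := hbnd 0 T
    refine continuousOn_of_dominated (bound := fun x => C0 * (C0 * (1 + x ^ 2)⁻¹)) ?_ ?_ ?_ ?_
    · exact fun s _ => (((hsx s).continuous).pow 2).aestronglyMeasurable
    · intro s hs
      refine ae_of_all _ fun x => ?_
      have b0 : |u s x| ≤ C0 * (1 + x ^ 2)⁻¹ := by
        have := hB0 s hs x; rwa [iteratedDeriv_zero] at this
      have p0 : |u s x| ≤ C0 := b0.trans (aux_le_const hC0 x)
      rw [Real.norm_eq_abs, abs_of_nonneg (sq_nonneg _)]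
      nlinarith [mul_le_mul p0 b0 (abs_nonneg _) hC0, sq_abs (u s x)]
    · exact (integrable_inv_one_add_sq.const_mul C0).const_mul C0
    · exact ae_of_all _ fun x => (((hts x).continuous).pow 2).continuousOn
  have hDcont : ∀ T : ℝ, ContinuousOn (fun s => ∫ x, (deriv (u s) x) ^ 2) (Icc 0 T) := by
    intro T
    obtain ⟨C1, hC1, hB1⟩ := hbnd 1 T
    refine continuousOn_of_dominated (bound := fun x => C1 * (C1 * (1 + x ^ 2)⁻¹)) ?_ ?_ ?_ ?_
    · exact fun s _ => (((hsx1 s).continuous).pow 2).aestronglyMeasurable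
    · intro s hs
      refine ae_of_all _ fun x => ?_
      have b1 : |deriv (u s) x| ≤ C1 * (1 + x ^ 2)⁻¹ := by
        have := hB1 s hs x; rwa [iteratedDeriv_one] at this
      have p1 : |deriv (u s) x| ≤ C1 := b1.trans (aux_le_const hC1 x)
      rw [Real.norm_eq_abs, abs_of_nonneg (sq_nonneg _)]
      nlinarith [mul_le_mul p1 b1 (abs_nonneg _) hC1, sq_abs (deriv (u s) x)]
    · exact (integrable_inv_one_add_sq.const_mul C1).const_mul C1
    · refine ae_of_all _ fun x => ?_
      have : Continuous (fun s => deriv (u s) x) :=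
        hv1c.comp (continuous_id.prodMk continuous_const)
      exact (this.pow 2).continuousOn
  -- energy inequality up to time T
  have henergy : ∀ T : ℝ, 0 < T →
      ε * (∫ t in Ioc (0:ℝ) T, ∫ x, (deriv (u t) x) ^ 2) ≤ (∫ x, (u₀ x) ^ 2) / 2 := by
    intro T hT
    have hle : (0:ℝ) ≤ T := hT.le
    have hii : IntervalIntegrable (fun s => -(2 * ε) * ∫ x, (deriv (u s) x) ^ 2) volume 0 T :=
      ((continuousOn_const.mul (hDcont T)).mono (uIcc_of_le hle).subset).intervalIntegrable
    have hFTC := intervalIntegral.integral_eq_sub_of_hasDeriv_right_of_le hle (hgcont T)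
      (fun s hs => (hgderiv s hs.1).hasDerivWithinAt) hii
    rw [intervalIntegral.integral_const_mul, intervalIntegral.integral_of_le hle] at hFTC
    have hgT : 0 ≤ ∫ x, (u T x) ^ 2 := integral_nonneg fun x => sq_nonneg _
    have hg0 : (∫ x, (u 0 x) ^ 2) = ∫ x, (u₀ x) ^ 2 := by rw [hinit]
    rw [hg0] at hFTC
    nlinarith [hFTC, hgT]
  -- pass to lintegral
  have hCU2nn : (0:ℝ) ≤ CU2 := le_trans (abs_nonneg _) (hCU2 0)
  have hg0nn : (0:ℝ) ≤ ∫ x, (u₀ x) ^ 2 := integral_nonneg fun x => sq_nonneg _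
  have hS : ENNReal.ofReal ε * ∫⁻ t in Ioi (0:ℝ),
      ENNReal.ofReal (∫ x, (deriv (u t) x) ^ 2) ≤ ENNReal.ofReal ((∫ x, (u₀ x) ^ 2) / 2) := by
    have hcover : Ioi (0:ℝ) = ⋃ n : ℕ, Ioc (0:ℝ) (n + 1) := by
      ext x
      simp only [mem_Ioi, mem_iUnion, mem_Ioc]
      constructor
      · intro hx
        obtain ⟨n, hn⟩ := exists_nat_ge x
        exact ⟨n, hx, by linarith⟩
      · rintro ⟨n, h1, -⟩
        exact h1
    have hmono : Monotone (fun n : ℕ => Ioc (0:ℝ) (n + 1)) := fun m n h =>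
      Ioc_subset_Ioc_right (by exact_mod_cast add_le_add_left (Nat.cast_le.mpr h) 1)
    rw [hcover, setLIntegral_iUnion_of_directed _ hmono.directed_le, ENNReal.mul_iSup]
    refine iSup_le fun n => ?_
    have hpos : (0:ℝ) < (n:ℝ) + 1 := by positivity
    have hDi : IntegrableOn (fun s => ∫ x, (deriv (u s) x) ^ 2) (Ioc (0:ℝ) ((n:ℝ) + 1)) :=
      ((hDcont ((n:ℝ) + 1)).integrableOn_Icc).mono_set Ioc_subset_Icc_self
    rw [← ofReal_integral_eq_lintegral_ofReal hDi
      (ae_of_all _ fun s => integral_nonneg fun x => sq_nonneg _)]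
    rw [← ENNReal.ofReal_mul hε.le]
    exact ENNReal.ofReal_le_ofReal (henergy ((n:ℝ) + 1) hpos)
  have hinner : ∀ t, (∫⁻ x, ENNReal.ofReal (|iteratedDeriv 2 U (u t x)| * (deriv (u t) x) ^ 2))
      ≤ ENNReal.ofReal CU2 * ∫⁻ x, ENNReal.ofReal ((deriv (u t) x) ^ 2) := by
    intro t
    rw [← lintegral_const_mul' _ _ ENNReal.ofReal_ne_top]
    refine lintegral_mono fun x => ?_
    rw [← ENNReal.ofReal_mul hCU2nn]
    exact ENNReal.ofReal_le_ofReal (mul_le_mul_of_nonneg_right (hCU2 _) (sq_nonneg _))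
  have hL : ∫⁻ t in Ioi (0:ℝ), (∫⁻ x, ENNReal.ofReal ((deriv (u t) x) ^ 2))
      = ∫⁻ t in Ioi (0:ℝ), ENNReal.ofReal (∫ x, (deriv (u t) x) ^ 2) := by
    refine setLIntegral_congr_fun measurableSet_Ioi (fun t ht => ?_)
    exact (ofReal_integral_eq_lintegral_ofReal (hDint t (le_of_lt ht))
      (ae_of_all _ fun x => sq_nonneg _)).symm
  calc ENNReal.ofReal ε *
        ∫⁻ t in Set.Ioi (0:ℝ), ∫⁻ x : ℝ,
          ENNReal.ofReal (|iteratedDeriv 2 U (u t x)| * (deriv (u t) x) ^ 2)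
      ≤ ENNReal.ofReal ε * ∫⁻ t in Set.Ioi (0:ℝ),
          ENNReal.ofReal CU2 * ∫⁻ x, ENNReal.ofReal ((deriv (u t) x) ^ 2) := by
        exact mul_le_mul_right (lintegral_mono fun t => hinner t) _
    _ = ENNReal.ofReal CU2 * (ENNReal.ofReal ε * ∫⁻ t in Set.Ioi (0:ℝ),
          ∫⁻ x, ENNReal.ofReal ((deriv (u t) x) ^ 2)) := by
        rw [lintegral_const_mul' _ _ ENNReal.ofReal_ne_top]
        ring
    _ = ENNReal.ofReal CU2 * (ENNReal.ofReal ε * ∫⁻ t in Set.Ioi (0:ℝ),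
          ENNReal.ofReal (∫ x, (deriv (u t) x) ^ 2)) := by rw [hL]
    _ ≤ ENNReal.ofReal CU2 * ENNReal.ofReal ((∫ x, (u₀ x) ^ 2) / 2) := mul_le_mul_right hS _
    _ = ENNReal.ofReal (CU2 * ((∫ x, (u₀ x) ^ 2) / 2)) := (ENNReal.ofReal_mul hCU2nn).symm
    _ = ENNReal.ofReal ((CU2 / 2) * ∫ x : ℝ, (u₀ x) ^ 2) := by congr 1; ring
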